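/- Let 𝔫 be the 5-dimensional real Lie algebra with orthonormal basis {E₁,…,E₅} and non-zero brackets [E₁,E₂] = m·E₃, [E₁,E₃] = (2/√3)m·E₄, [E₁,E₄] = m·E₅ with m > 0. Then the diagonal endomorphism D defined by D(E₁) = (1/3)m²·E₁, D(E₂) = (3/2)m²·E₂, D(E₃) = (11/6)m²·E₃, D(E₄) = (13/6)m²·E₄, D(E₅) = (5/2)m²·E₅ is a derivation of 𝔫, and Ric = −2m²·Id + D. -/

import Mathlib

open scoped BigOperators

namespace Nilsoliton6

noncomputable section

abbrev V : Type := Fin 5 → ℝ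

/-- The orthonormal basis vectors E₁,…,E₅ (indexed 0,…,4). -/
def E (i : Fin 5) : V := Pi.single i 1

/-- The inner product making `E` an orthonormal basis. -/
def ip (x y : V) : ℝ := ∑ i, x i * y i

/-- `D` is a derivation of the bracket `br`. -/
def IsDerivation (br : V → V → V) (D : V →ₗ[ℝ] V) : Prop :=
  ∀ X Y : V, D (br X Y) = br (D X) Y + br X (D Y)

/-- `Ric` is the Ricci operator of the nilpotent Lie group with left-invariant
metric determined by the bracket `br` and the orthonormal basis `E`. -/
def IsRicci (br : V → V → V) (Ric : V →ₗ[ℝ] V) : Prop :=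
  ∀ X Y : V, ip (Ric X) Y =
      -(1/2) * (∑ i : Fin 5, ip (br X (E i)) (br Y (E i)))
      + (1/4) * (∑ i : Fin 5, ∑ j : Fin 5, ip (br (E i) (E j)) X * ip (br (E i) (E j)) Y)

/-- The bracket: [E₁,E₂] = m·E₃, [E₁,E₃] = (2/√3)m·E₄, [E₁,E₄] = m·E₅. -/
def br (m : ℝ) (X Y : V) : V :=
  (m * (X 0 * Y 1 - X 1 * Y 0)) • E 2 + ((2 / Real.sqrt 3) * m * (X 0 * Y 2 - X 2 * Y 0)) • E 3 + (m * (X 0 * Y 3 - X 3 * Y 0)) • E 4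

/-!
Both `D` and `Ric` are diagonal in the basis `E`. The weights `1/3, 3/2, 11/6, 13/6, 5/2` of `D`
are additive along the three brackets (`1/3 + 3/2 = 11/6`, …), which makes `D` a derivation. In
the Ricci formula, `Ric Eₖ` picks up `-1/2` times the squared structure constants of the brackets
`[Eₖ, ·]` and `+1/2` times those of the brackets landing in `Eₖ`; with squared constants
`m², 4m²/3, m²` this gives the weights `-5/3, -1/2, -1/6, 1/6, 1/2` (times `m²`), which are
those of `D` shifted by `-2`.
-/

lemma ip_E (x : V) (k : Fin 5) : ip x (E k) = x k := by
  simp [ip, E, Pi.single_apply]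

lemma apply_eq_mul_of_apply_E {f : V →ₗ[ℝ] V} {d : Fin 5 → ℝ}
    (hf : ∀ i, f (E i) = d i • E i) (x : V) (j : Fin 5) : f x j = d j * x j := by
  have hx : x = ∑ i, x i • E i := by
    ext j
    simp [E, Pi.single_apply]
  have hfx : f x = ∑ i, (x i * d i) • E i := by
    conv_lhs => rw [hx]
    simp only [map_sum, map_smul, hf, smul_smul]
  rw [hfx]
  simp [E, Pi.single_apply, mul_comm]

lemma isDerivation_br_of_weights (m : ℝ) {f : V →ₗ[ℝ] V} {d : Fin 5 → ℝ}
    (hf : ∀ x j, f x j = d j * x j)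
    (h2 : d 2 = d 0 + d 1) (h3 : d 3 = d 0 + d 2) (h4 : d 4 = d 0 + d 3) :
    IsDerivation (br m) f := by
  intro X Y
  ext j
  simp only [hf, br, E, Pi.add_apply, Pi.smul_apply, Pi.single_apply, smul_eq_mul]
  fin_cases j <;> simp [h2, h3, h4] <;> ring

lemma sq_two_div_sqrt_three : (2 / Real.sqrt 3) ^ 2 = 4 / 3 := by
  rw [div_pow, Real.sq_sqrt (by norm_num)]; norm_num

lemma ricciFormula_br (m : ℝ) (X Y : V) :
    -(1/2) * (∑ i : Fin 5, ip (br m X (E i)) (br m Y (E i)))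
      + (1/4) * (∑ i : Fin 5, ∑ j : Fin 5, ip (br m (E i) (E j)) X * ip (br m (E i) (E j)) Y)
      = ∑ k, ![-5/3, -1/2, -1/6, 1/6, 1/2] k * m ^ 2 * X k * Y k := by
  simp only [ip, br, E, Pi.single_apply, Pi.add_apply, Pi.smul_apply, smul_eq_mul,
    Fin.sum_univ_five, Fin.isValue, Fin.reduceEq, ↓reduceIte, Matrix.cons_val]
  linear_combination m ^ 2 * (X 3 * Y 3 - X 0 * Y 0 - X 2 * Y 2) / 2 * sq_two_div_sqrt_three

lemma IsRicci.apply_eq_mul {m : ℝ} {Ric : V →ₗ[ℝ] V} (hRic : IsRicci (br m) Ric)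
    (x : V) (j : Fin 5) : Ric x j = ![-5/3, -1/2, -1/6, 1/6, 1/2] j * m ^ 2 * x j := by
  rw [← ip_E (Ric x) j, hRic, ricciFormula_br]
  simp [E, Pi.single_apply]

theorem stmt6_general (m : ℝ)
    (Ric : V →ₗ[ℝ] V) (hRic : IsRicci (br m) Ric)
    (D : V →ₗ[ℝ] V)
    (hD0 : D (E 0) = ((1/3) * m ^ 2) • E 0)
    (hD1 : D (E 1) = ((3/2) * m ^ 2) • E 1)
    (hD2 : D (E 2) = ((11/6) * m ^ 2) • E 2)
    (hD3 : D (E 3) = ((13/6) * m ^ 2) • E 3)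
    (hD4 : D (E 4) = ((5/2) * m ^ 2) • E 4) :
    IsDerivation (br m) D ∧
    Ric = (-2 * m ^ 2) • (LinearMap.id : V →ₗ[ℝ] V) + D := by
  have hD : ∀ x j, D x j = ![1/3, 3/2, 11/6, 13/6, 5/2] j * m ^ 2 * x j := by
    refine apply_eq_mul_of_apply_E fun i => ?_
    fin_cases i
    exacts [hD0, hD1, hD2, hD3, hD4]
  refine ⟨isDerivation_br_of_weights m hD (by simp; ring) (by simp; ring) (by simp; ring), ?_⟩
  refine LinearMap.ext fun x => funext fun j => ?_
  simp only [hRic.apply_eq_mul, LinearMap.add_apply, LinearMap.smul_apply, LinearMap.id_apply,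
    Pi.add_apply, Pi.smul_apply, smul_eq_mul, hD]
  fin_cases j <;> norm_num <;> ring

theorem stmt6 (m : ℝ) (hm : 0 < m)
    (Ric : V →ₗ[ℝ] V) (hRic : IsRicci (br m) Ric)
    (D : V →ₗ[ℝ] V)
    (hD0 : D (E 0) = ((1/3) * m ^ 2) • E 0)
    (hD1 : D (E 1) = ((3/2) * m ^ 2) • E 1)
    (hD2 : D (E 2) = ((11/6) * m ^ 2) • E 2)
    (hD3 : D (E 3) = ((13/6) * m ^ 2) • E 3)
    (hD4 : D (E 4) = ((5/2) * m ^ 2) • E 4) :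
    IsDerivation (br m) D ∧
    Ric = (-2 * m ^ 2) • (LinearMap.id : V →ₗ[ℝ] V) + D :=
  stmt6_general m Ric hRic D hD0 hD1 hD2 hD3 hD4

end

end Nilsoliton6
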